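/- arXiv:2107.02422 — 8 statements merged into one kernel-verified Lean document; each statement's English description precedes it below -/
import Mathlib

section
/- Let k ≥ 2, 1 ≤ p ≤ k-1, q = k - p, and let Q : ℝ^k → ℝ^k be defined componentwise by Q(x)_i = x_i^2 - (1/k)∑_{j=1}^k x_j^2. Then Q(ε_p) = √(1/(pqk)) · (q - p) · ε_p, i.e., ε_p is an eigenvector of the quadratic map Q with eigenvalue (q-p)/√(pqk). -/
theorem Q_eigenvector_eps_p (k p q : ℕ) (hk : 2 ≤ k) (hp1 : 1 ≤ p)
    (hpk : p ≤ k - 1) (hq : p + q = k)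
    (ε : EuclideanSpace ℝ (Fin k))
    (hε : ∀ i : Fin k, ε i =
      (1 / Real.sqrt ((p : ℝ) * q * k)) * (if (i : ℕ) < p then (q : ℝ) else -(p : ℝ)))
    (Q : EuclideanSpace ℝ (Fin k) → EuclideanSpace ℝ (Fin k))
    (hQ : ∀ x, ∀ i : Fin k, Q x i = x i ^ 2 - (1 / (k : ℝ)) * ∑ j, x j ^ 2) :
    Q ε = (Real.sqrt (1 / ((p : ℝ) * q * k)) * ((q : ℝ) - (p : ℝ))) • ε := by
  have hq1 : 1 ≤ q := by omega
  have hp0 : (0:ℝ) < p := by exact_mod_cast hp1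
  have hq0 : (0:ℝ) < q := by exact_mod_cast hq1
  have hk0 : (0:ℝ) < k := by exact_mod_cast (by omega : 0 < k)
  have hpqk : (0:ℝ) < (p:ℝ) * q * k := by positivity
  obtain ⟨c, hc⟩ : ∃ c : ℝ, c = 1 / Real.sqrt ((p : ℝ) * q * k) := ⟨_, rfl⟩
  have hc2 : c ^ 2 = 1 / ((p:ℝ) * q * k) := by
    rw [hc, div_pow, one_pow, Real.sq_sqrt hpqk.le]
  have hkpq : (k:ℝ) = (p:ℝ) + q := by
    have := hq; push_cast [← this]; ring
  have hsqrt : Real.sqrt (1 / ((p : ℝ) * q * k)) = c := by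
    rw [hc, one_div, one_div, Real.sqrt_inv]
  have hsum : ∑ j : Fin k, ε j ^ 2 = 1 := by
    have : ∑ j : Fin k, ε j ^ 2
        = ∑ j ∈ Finset.range k, (c * (if j < p then (q:ℝ) else -(p:ℝ))) ^ 2 := by
      simp only [hε, ← hc]
      exact Fin.sum_univ_eq_sum_range (fun j => (c * (if j < p then (q:ℝ) else -(p:ℝ))) ^ 2) k
    rw [this, ← hq, Finset.sum_range_add]
    have h1 : ∀ j ∈ Finset.range p, (c * (if j < p then (q:ℝ) else -(p:ℝ))) ^ 2
        = c ^ 2 * q ^ 2 := by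
      intro j hj
      rw [Finset.mem_range] at hj
      rw [if_pos hj]; ring
    have h2 : ∀ j ∈ Finset.range q, (c * (if p + j < p then (q:ℝ) else -(p:ℝ))) ^ 2
        = c ^ 2 * p ^ 2 := by
      intro j hj
      rw [if_neg (by omega)]; ring
    rw [Finset.sum_congr rfl h1, Finset.sum_congr rfl h2,
      Finset.sum_const, Finset.sum_const, Finset.card_range, Finset.card_range,
      nsmul_eq_mul, nsmul_eq_mul, hc2, hkpq]
    field_simp
    ring
  ext i
  rw [hQ, hsum, PiLp.smul_apply, hε i, smul_eq_mul, hsqrt, ← hc]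
  have hc2' : c * c = 1 / ((p:ℝ) * q * k) := by rw [← sq, hc2]
  by_cases hi : (i:ℕ) < p
  · rw [if_pos hi]
    have h : (c * (q:ℝ)) ^ 2 - 1 / k * 1 - c * ((q:ℝ) - p) * (c * q) = c ^ 2 * (p * q) - 1/k := by
      ring
    have h2 : c ^ 2 * ((p:ℝ) * q) - 1/k = 0 := by
      rw [hc2, hkpq]; field_simp; ring
    linarith [h, h2]
  · rw [if_neg hi]
    have h : (c * -(p:ℝ)) ^ 2 - 1 / k * 1 - c * ((q:ℝ) - p) * (c * -p) = c ^ 2 * (p * q) - 1/k := by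
      ring
    have h2 : c ^ 2 * ((p:ℝ) * q) - 1/k = 0 := by
      rw [hc2, hkpq]; field_simp; ring
    linarith [h, h2]
end

section
/- Let C(x) = (1/3)∑_{i=1}^k x_i^3 restricted to the unit sphere of the hyperplane H_{k-1} ⊂ ℝ^k. Then C attains its maximum over the unit sphere of H_{k-1} at the points of the S_k-orbit of ε_1, and C(ε_1) = (k-2)/(3√(k(k-1))). -/
set_option maxHeartbeats 1000000 in
theorem cubic_max_on_sphere (k : ℕ) (hk : 2 ≤ k)
    (ε : EuclideanSpace ℝ (Fin k))
    (hε : ∀ i : Fin k, ε i =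
      (1 / Real.sqrt (((k : ℝ) - 1) * k)) * (if (i : ℕ) = 0 then (k : ℝ) - 1 else -1))
    (C : EuclideanSpace ℝ (Fin k) → ℝ)
    (hC : ∀ x, C x = (1 / 3) * ∑ i, x i ^ 3) :
    C ε = ((k : ℝ) - 2) / (3 * Real.sqrt ((k : ℝ) * ((k : ℝ) - 1))) ∧
    ∀ u : EuclideanSpace ℝ (Fin k), (∑ i, u i = 0) → ‖u‖ = 1 →
      C u ≤ C ε ∧ (C u = C ε ↔ ∃ σ : Equiv.Perm (Fin k), u = fun i => ε (σ i)) := by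
  haveI : NeZero k := ⟨by omega⟩
  have hK2 : (2:ℝ) ≤ (k:ℝ) := by exact_mod_cast hk
  set K : ℝ := (k:ℝ) with hKdef
  set s : ℝ := Real.sqrt (K * (K - 1)) with hsdef
  have hs_pos : 0 < s := Real.sqrt_pos.2 (by nlinarith)
  have hs_ne : s ≠ 0 := ne_of_gt hs_pos
  have hs2 : s ^ 2 = K * (K - 1) := Real.sq_sqrt (by nlinarith)
  set M : ℝ := (K - 1) / s with hMdef
  set m : ℝ := -1 / s with hmdef
  have hMpos : 0 < M := div_pos (by linarith) hs_pos
  have hmneg : m < 0 := div_neg_of_neg_of_pos (by norm_num) hs_pos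
  clear_value K s M m
  have hε' : ∀ i : Fin k, ε i = if i = 0 then M else m := by
    intro i
    rw [hε i, show Real.sqrt ((K - 1) * K) = s by rw [hsdef, mul_comm]]
    have hiff : ((i : ℕ) = 0) ↔ (i = 0) := by
      constructor
      · intro h; exact Fin.ext (by simp [h])
      · intro h; simp [h]
    rw [hMdef, hmdef]
    by_cases h : i = 0
    · rw [if_pos (hiff.mpr h), if_pos h]; ring
    · rw [if_neg (fun hh => h (hiff.mp hh)), if_neg h]; ring
  have hεsum3 : ∑ i, ε i ^ 3 = M ^ 3 + (K - 1) * m ^ 3 := by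
    have h1 : ∀ i : Fin k, ε i ^ 3 = m ^ 3 + (if i = (0 : Fin k) then M ^ 3 - m ^ 3 else 0) := by
      intro i; rw [hε' i]; split_ifs <;> ring
    rw [Finset.sum_congr rfl (fun i _ => h1 i), Finset.sum_add_distrib,
      Finset.sum_const, Finset.sum_ite_eq' Finset.univ]
    simp only [Finset.card_univ, Fintype.card_fin, Finset.mem_univ, if_true, nsmul_eq_mul]
    rw [← hKdef]; ring
  have hid : M + 2 * m + K * (M * m ^ 2) = M ^ 3 + (K - 1) * m ^ 3 := by
    rw [hMdef, hmdef]
    field_simp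
    linear_combination (K - 3) * hs2
  have h2id : M ^ 3 + (K - 1) * m ^ 3 = (K - 2) / s := by
    rw [hMdef, hmdef]
    field_simp
    linear_combination (2 - K) * hs2
  have hMK : M ^ 2 * K = K - 1 := by
    rw [hMdef, div_pow, hs2, div_mul_eq_mul_div,
      div_eq_iff (show K * (K - 1) ≠ 0 by nlinarith)]
    ring
  have hCε : C ε = (K - 2) / (3 * s) := by
    rw [hC, hεsum3, h2id]; ring
  refine ⟨hCε, ?_⟩
  intro u hsum hnorm
  have hsum2 : ∑ i, u i ^ 2 = 1 := by
    have h0 := EuclideanSpace.norm_eq u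
    rw [hnorm] at h0
    have hnn : 0 ≤ ∑ i, ‖u i‖ ^ 2 := Finset.sum_nonneg fun i _ => sq_nonneg _
    have h2 := Real.sq_sqrt hnn
    rw [← h0] at h2
    have h1 : ∑ i, ‖u i‖ ^ 2 = 1 := by simpa using h2.symm
    simpa [Real.norm_eq_abs, sq_abs] using h1
  have hbound : ∀ i, u i ≤ M := by
    intro i
    have hcs := sq_sum_le_card_mul_sum_sq
      (s := Finset.univ.erase i) (f := fun j => u j)
    have he1 : ∑ j ∈ Finset.univ.erase i, u j = -u i := by
      have h := Finset.sum_erase_add Finset.univ (fun j => u j) (Finset.mem_univ i)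
      rw [hsum] at h; linarith
    have he2 : ∑ j ∈ Finset.univ.erase i, u j ^ 2 = 1 - u i ^ 2 := by
      have h := Finset.sum_erase_add Finset.univ (fun j => u j ^ 2) (Finset.mem_univ i)
      simp only at h
      rw [hsum2] at h; linarith
    have hcard : (((Finset.univ.erase i).card : ℕ) : ℝ) = K - 1 := by
      rw [Finset.card_erase_of_mem (Finset.mem_univ i), Finset.card_univ, Fintype.card_fin,
        hKdef, Nat.cast_sub (by omega : 1 ≤ k), Nat.cast_one]
    rw [he1, he2, hcard] at hcs
    have hui2 : u i ^ 2 ≤ M ^ 2 := by nlinarith [hMK, hcs, hK2]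
    nlinarith [hui2, hMpos]
  have hterm : ∀ i, (0:ℝ) ≤ (M - u i) * (u i - m) ^ 2 := fun i =>
    mul_nonneg (by linarith [hbound i]) (sq_nonneg _)
  have hsumg : ∑ i, (M - u i) * (u i - m) ^ 2
      = (M ^ 3 + (K - 1) * m ^ 3) - ∑ i, u i ^ 3 := by
    have expand : ∀ i : Fin k, (M - u i) * (u i - m) ^ 2
        = ((M + 2 * m) * u i ^ 2 + (-(m ^ 2 + 2 * M * m)) * u i + M * m ^ 2) - u i ^ 3 :=
      fun i => by ring
    rw [Finset.sum_congr rfl (fun i _ => expand i), Finset.sum_sub_distrib,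
      Finset.sum_add_distrib, Finset.sum_add_distrib, ← Finset.mul_sum, ← Finset.mul_sum,
      Finset.sum_const]
    simp only [Finset.card_univ, Fintype.card_fin, nsmul_eq_mul]
    rw [hsum, hsum2, ← hKdef]
    linear_combination hid
  have hle : C u ≤ C ε := by
    rw [hC u, hC ε, hεsum3]
    have hnn : 0 ≤ ∑ i, (M - u i) * (u i - m) ^ 2 := Finset.sum_nonneg fun i _ => hterm i
    linarith [hsumg]
  refine ⟨hle, ?_, ?_⟩
  · -- forward direction of iff
    intro heq
    have hzero : ∑ i, (M - u i) * (u i - m) ^ 2 = 0 := by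
      rw [hC u, hC ε, hεsum3] at heq
      linarith [hsumg]
    have hall : ∀ i ∈ Finset.univ, (M - u i) * (u i - m) ^ 2 = 0 :=
      (Finset.sum_eq_zero_iff_of_nonneg fun i _ => hterm i).mp hzero
    have huval : ∀ i : Fin k, u i = M ∨ u i = m := by
      intro i
      rcases mul_eq_zero.mp (hall i (Finset.mem_univ i)) with h | h
      · left; linarith
      · right
        have h3 := pow_eq_zero_iff (n := 2) (by norm_num) |>.mp h
        linarith
    classical
    set T : Finset (Fin k) := Finset.univ.filter (fun i => u i = M) with hT
    have hMm : M ≠ m := by linarith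
    have hsplit : (0:ℝ) = (T.card : ℝ) * M + (K - T.card) * m := by
      have h1 : ∀ i : Fin k, u i = if u i = M then M else m := by
        intro i
        rcases huval i with h | h
        · rw [if_pos h]; exact h
        · rw [if_neg (by rw [h]; exact fun hh => hMm hh.symm)]; exact h
      have h2 : ∑ i, u i = ∑ i, (if u i = M then M else m) :=
        Finset.sum_congr rfl fun i _ => h1 i
      rw [hsum, Finset.sum_ite, Finset.sum_const, Finset.sum_const,
        nsmul_eq_mul, nsmul_eq_mul] at h2
      have hcards := Finset.card_filter_add_card_filter_not
        (s := (Finset.univ : Finset (Fin k))) (p := fun i => u i = M)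
      simp only [Finset.card_univ, Fintype.card_fin] at hcards
      have hc2 : (((Finset.univ.filter (fun i => ¬ u i = M)).card : ℕ) : ℝ) = K - T.card := by
        rw [hT]
        have heqc : (Finset.univ.filter (fun i => ¬ u i = M)).card
            = k - (Finset.univ.filter (fun i => u i = M)).card := by omega
        rw [heqc, hKdef, Nat.cast_sub (by omega)]
      rw [hc2] at h2
      rw [h2, hT]
    have hcardT : T.card = 1 := by
      have hKpos : (0:ℝ) < K := by linarith
      rw [hMdef, hmdef] at hsplit
      have h3 : (T.card : ℝ) * K = K := by
        field_simp at hsplit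
        linarith
      have h4 : (T.card : ℝ) = 1 := by
        have := mul_right_cancel₀ (ne_of_gt hKpos) (h3.trans (one_mul K).symm)
        exact this
      exact_mod_cast h4
    obtain ⟨i₀, hi₀⟩ := Finset.card_eq_one.mp hcardT
    have hui₀ : u i₀ = M := by
      have hmem : i₀ ∈ T := by rw [hi₀]; exact Finset.mem_singleton_self i₀
      exact (Finset.mem_filter.mp hmem).2
    have hother : ∀ j, j ≠ i₀ → u j = m := by
      intro j hj
      rcases huval j with h | h
      · exfalso
        have hmem : j ∈ T := Finset.mem_filter.mpr ⟨Finset.mem_univ j, h⟩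
        rw [hi₀, Finset.mem_singleton] at hmem
        exact hj hmem
      · exact h
    refine ⟨Equiv.swap 0 i₀, funext fun j => ?_⟩
    by_cases hj : j = i₀
    · subst hj
      rw [Equiv.swap_apply_right, hε' 0, if_pos rfl, hui₀]
    · have hσj : Equiv.swap 0 i₀ j ≠ 0 := by
        intro h
        have h2 : Equiv.swap 0 i₀ i₀ = 0 := Equiv.swap_apply_right 0 i₀
        exact hj ((Equiv.swap 0 i₀).injective (h.trans h2.symm))
      rw [hε' _, if_neg hσj, hother j hj]
  · -- backward direction
    rintro ⟨σ, huσ⟩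
    rw [hC u, hC ε, huσ]
    simp only []
    rw [Equiv.sum_comp σ (fun j => ε j ^ 3)]
end

section
/- With k ≥ 3, 2 ≤ p ≤ ⌈k/2⌉, q = k-p, and U_p as above: the preimage under U_p of the line L_p = ℝ·ε_p is the line {(u, m_p u) : u ∈ ℝ} ⊂ ℝ², where m_p = √(k(p-1)/q). -/
private lemma sq_eq_of_nonneg {a b : ℝ} (ha : 0 ≤ a) (hb : 0 ≤ b) (h : a ^ 2 = b ^ 2) :
    a = b := by
  have : Real.sqrt (a ^ 2) = Real.sqrt (b ^ 2) := by rw [h]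
  rwa [Real.sqrt_sq ha, Real.sqrt_sq hb] at this

theorem Up_preimage_Lp (k p q : ℕ) (hk : 3 ≤ k) (hp : 2 ≤ p) (hpk : p ≤ (k + 1) / 2)
    (hq : p + q = k)
    (U : ℝ × ℝ → EuclideanSpace ℝ (Fin k))
    (hU : ∀ u v : ℝ, ∀ i : Fin k, U (u, v) i =
      if (i : ℕ) = 0 then ((k : ℝ) - 1) * u / Real.sqrt ((k : ℝ) * ((k : ℝ) - 1))
      else if (i : ℕ) < p then
        -u / Real.sqrt ((k : ℝ) * ((k : ℝ) - 1)) +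
          (q : ℝ) * v / Real.sqrt (((k : ℝ) - 1) * ((p : ℝ) - 1) * q)
      else
        -u / Real.sqrt ((k : ℝ) * ((k : ℝ) - 1)) -
          ((p : ℝ) - 1) * v / Real.sqrt (((k : ℝ) - 1) * ((p : ℝ) - 1) * q))
    (ε : EuclideanSpace ℝ (Fin k))
    (hε : ∀ i : Fin k, ε i =
      (1 / Real.sqrt ((p : ℝ) * q * k)) * (if (i : ℕ) < p then (q : ℝ) else -(p : ℝ))) :
    U ⁻¹' {w : EuclideanSpace ℝ (Fin k) | ∃ c : ℝ, w = c • ε} =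
      {x : ℝ × ℝ | x.2 = Real.sqrt ((k : ℝ) * ((p : ℝ) - 1) / q) * x.1} := by
  have hq1 : 1 ≤ q := by omega
  have hkr : (3 : ℝ) ≤ (k : ℝ) := by exact_mod_cast hk
  have hpr : (2 : ℝ) ≤ (p : ℝ) := by exact_mod_cast hp
  have hqr : (1 : ℝ) ≤ (q : ℝ) := by exact_mod_cast hq1
  have hqk : (p : ℝ) + (q : ℝ) = (k : ℝ) := by exact_mod_cast hq
  set A := Real.sqrt ((k : ℝ) * ((k : ℝ) - 1)) with hAdef
  set B := Real.sqrt (((k : ℝ) - 1) * ((p : ℝ) - 1) * q) with hBdef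
  set C := Real.sqrt ((p : ℝ) * q * k) with hCdef
  set m := Real.sqrt ((k : ℝ) * ((p : ℝ) - 1) / q) with hmdef
  have hk1 : (0:ℝ) < (k : ℝ) - 1 := by linarith
  have hp1 : (0:ℝ) < (p : ℝ) - 1 := by linarith
  have hq0 : (0:ℝ) < (q : ℝ) := by linarith
  have hk0 : (0:ℝ) < (k : ℝ) := by linarith
  have hp0 : (0:ℝ) < (p : ℝ) := by linarith
  have hA0 : 0 < A := Real.sqrt_pos.mpr (mul_pos hk0 hk1)
  have hB0 : 0 < B := Real.sqrt_pos.mpr (mul_pos (mul_pos hk1 hp1) hq0)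
  have hC0 : 0 < C := Real.sqrt_pos.mpr (mul_pos (mul_pos hp0 hq0) hk0)
  have hm0 : 0 ≤ m := Real.sqrt_nonneg _
  have hA2 : A ^ 2 = (k : ℝ) * ((k : ℝ) - 1) := Real.sq_sqrt (mul_pos hk0 hk1).le
  have hB2 : B ^ 2 = ((k : ℝ) - 1) * ((p : ℝ) - 1) * q := Real.sq_sqrt (mul_pos (mul_pos hk1 hp1) hq0).le
  have hm2 : m ^ 2 = (k : ℝ) * ((p : ℝ) - 1) / q := Real.sq_sqrt (div_nonneg (mul_pos hk0 hp1).le hq0.le)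
  -- key identity: m * q * A = k * B
  have key : m * (q : ℝ) * A = (k : ℝ) * B := by
    apply sq_eq_of_nonneg (by positivity) (by positivity)
    rw [mul_pow, mul_pow, mul_pow, hm2, hA2, hB2]
    field_simp
  have keyd : (q : ℝ) * m / B = (k : ℝ) / A := by
    rw [div_eq_div_iff hB0.ne' hA0.ne']
    linear_combination key
  ext ⟨u, v⟩
  simp only [Set.mem_preimage, Set.mem_setOf_eq]
  constructor
  · rintro ⟨c, hc⟩
    have h0 : U (u, v) ⟨0, by omega⟩ = (c • ε) ⟨0, by omega⟩ := by rw [hc]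
    have h1 : U (u, v) ⟨1, by omega⟩ = (c • ε) ⟨1, by omega⟩ := by rw [hc]
    rw [hU] at h0 h1
    simp only [PiLp.smul_apply, smul_eq_mul] at h0 h1
    rw [hε] at h0 h1
    have hp0' : 0 < p := by omega
    have hp1' : 1 < p := by omega
    norm_num [hp0', hp1'] at h0 h1
    have h2 : ((k : ℝ) - 1) * u / A = -u / A + (q : ℝ) * v / B := h0.trans h1.symm
    have h4 : (q : ℝ) * v * A = (k : ℝ) * u * B := by
      field_simp at h2
      have h5 : A * ((q : ℝ) * v * A) = A * ((k : ℝ) * u * B) := by linear_combination -A * h2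
      exact mul_left_cancel₀ hA0.ne' h5
    have h3 : v * ((q : ℝ) * A) = (m * u) * ((q : ℝ) * A) := by
      linear_combination h4 - u * key
    exact mul_right_cancel₀ (by positivity) h3
  · intro hv
    refine ⟨C * ((k : ℝ) - 1) * u / ((q : ℝ) * A), ?_⟩
    ext i
    simp only [PiLp.smul_apply, smul_eq_mul]
    rw [hU, hε, hv]
    by_cases hi0 : (i : ℕ) = 0
    · rw [if_pos hi0, if_pos (by omega : (i : ℕ) < p)]
      field_simp
    · rw [if_neg hi0]
      have hmB : m / B = (k : ℝ) / ((q : ℝ) * A) := by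
        rw [div_eq_div_iff hB0.ne' (by positivity)]
        linear_combination key
      by_cases hip : (i : ℕ) < p
      · rw [if_pos hip, if_pos hip,
          show (q : ℝ) * (m * u) / B = (q : ℝ) * u * (m / B) by ring, hmB]
        field_simp
        ring
      · rw [if_neg hip, if_neg hip,
          show ((p : ℝ) - 1) * (m * u) / B = ((p : ℝ) - 1) * u * (m / B) by ring, hmB]
        have hq' : (q : ℝ) = (k : ℝ) - (p : ℝ) := by linarith
        rw [hq']
        have hkp : (k : ℝ) - (p : ℝ) ≠ 0 := by linarith
        field_simp
        ring
end

section
/- With k ≥ 3, 2 ≤ p ≤ ⌈k/2⌉, q = k-p: the preimage under U_p of the line L*_{p-1} = ℝ·((1p)·ε_{p-1}) is the line {(-u, m* u) : u ∈ ℝ} ⊂ ℝ², where m* = √(qk/(p-1)) and (1p) denotes the transposition swapping coordinates 1 and p. -/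
theorem Up_preimage_Lstar (k p q : ℕ) (hk : 3 ≤ k) (hp : 2 ≤ p) (hpk : p ≤ (k + 1) / 2)
    (hq : p + q = k)
    (U : ℝ × ℝ → EuclideanSpace ℝ (Fin k))
    (hU : ∀ u v : ℝ, ∀ i : Fin k, U (u, v) i =
      if (i : ℕ) = 0 then ((k : ℝ) - 1) * u / Real.sqrt ((k : ℝ) * ((k : ℝ) - 1))
      else if (i : ℕ) < p then
        -u / Real.sqrt ((k : ℝ) * ((k : ℝ) - 1)) +
          (q : ℝ) * v / Real.sqrt (((k : ℝ) - 1) * ((p : ℝ) - 1) * q)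
      else
        -u / Real.sqrt ((k : ℝ) * ((k : ℝ) - 1)) -
          ((p : ℝ) - 1) * v / Real.sqrt (((k : ℝ) - 1) * ((p : ℝ) - 1) * q))
    (εpm1 : EuclideanSpace ℝ (Fin k))
    (hεpm1 : ∀ i : Fin k, εpm1 i =
      (1 / Real.sqrt (((p : ℝ) - 1) * ((q : ℝ) + 1) * k)) *
        (if (i : ℕ) < p - 1 then (q : ℝ) + 1 else -((p : ℝ) - 1)))
    (εstar : EuclideanSpace ℝ (Fin k))
    (hεstar : ∀ i : Fin k, εstar i = εpm1 (Equiv.swap (⟨0, by omega⟩ : Fin k) ⟨p - 1, by omega⟩ i)) :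
    U ⁻¹' {w : EuclideanSpace ℝ (Fin k) | ∃ c : ℝ, w = c • εstar} =
      {x : ℝ × ℝ | x.2 = -(Real.sqrt ((q : ℝ) * k / ((p : ℝ) - 1))) * x.1} := by
  have hq1 : 1 ≤ q := by omega
  have hkR : (3:ℝ) ≤ (k:ℝ) := by exact_mod_cast hk
  have hpR : (2:ℝ) ≤ (p:ℝ) := by exact_mod_cast hp
  have hqR : (1:ℝ) ≤ (q:ℝ) := by exact_mod_cast hq1
  have hpq : (p:ℝ) + (q:ℝ) = (k:ℝ) := by exact_mod_cast hq
  have hk0 : (0:ℝ) < (k:ℝ) := by linarith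
  have hk1 : (0:ℝ) < (k:ℝ) - 1 := by linarith
  have hp1 : (0:ℝ) < (p:ℝ) - 1 := by linarith
  have hq0 : (0:ℝ) < (q:ℝ) := by linarith
  set a := Real.sqrt ((k : ℝ) * ((k : ℝ) - 1)) with ha_def
  set b := Real.sqrt (((k : ℝ) - 1) * ((p : ℝ) - 1) * q) with hb_def
  set s0 := Real.sqrt (((p : ℝ) - 1) * ((q : ℝ) + 1) * k) with hs_def
  set m := Real.sqrt ((q : ℝ) * k / ((p : ℝ) - 1)) with hm_def
  have ha : 0 < a := Real.sqrt_pos.mpr (mul_pos hk0 hk1)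
  have hb : 0 < b := Real.sqrt_pos.mpr (mul_pos (mul_pos hk1 hp1) hq0)
  have hs : 0 < s0 := Real.sqrt_pos.mpr (mul_pos (mul_pos hp1 (by linarith)) hk0)
  have hm : 0 < m := Real.sqrt_pos.mpr (div_pos (mul_pos hq0 hk0) hp1)
  have hane : a ≠ 0 := ne_of_gt ha
  have hbne : b ≠ 0 := ne_of_gt hb
  have hsne : s0 ≠ 0 := ne_of_gt hs
  have hp1ne : (p:ℝ) - 1 ≠ 0 := ne_of_gt hp1
  have ha2 : a ^ 2 = (k:ℝ) * ((k:ℝ) - 1) := Real.sq_sqrt (le_of_lt (mul_pos hk0 hk1))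
  have hb2 : b ^ 2 = ((k:ℝ) - 1) * ((p:ℝ) - 1) * q :=
    Real.sq_sqrt (le_of_lt (mul_pos (mul_pos hk1 hp1) hq0))
  have hm2 : m ^ 2 = (q:ℝ) * k / ((p:ℝ) - 1) :=
    Real.sq_sqrt (le_of_lt (div_pos (mul_pos hq0 hk0) hp1))
  have hkey : ((p:ℝ) - 1) * a * m = (k:ℝ) * b := by
    have hsq : (((p:ℝ) - 1) * a * m) ^ 2 = ((k:ℝ) * b) ^ 2 := by
      field_simp [mul_pow, ha2, hb2, hm2]
      have hm2' : m ^ 2 * ((p:ℝ) - 1) = (q:ℝ) * k := by rw [hm2, div_mul_cancel₀ _ hp1ne]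
      linear_combination (((p:ℝ) - 1) * a ^ 2) * hm2' + (((p:ℝ) - 1) * q * k) * ha2 - (k:ℝ) ^ 2 * hb2
    have h := congrArg Real.sqrt hsq
    rwa [Real.sqrt_sq (mul_nonneg (mul_nonneg hp1.le ha.le) hm.le),
      Real.sqrt_sq (mul_nonneg hk0.le hb.le)] at h
  have hm' : m = (k:ℝ) * b / (((p:ℝ) - 1) * a) := by
    field_simp
    linear_combination hkey
  have e0 : εstar ⟨0, by omega⟩ = (1 / s0) * (-((p:ℝ) - 1)) := by
    rw [hεstar, Equiv.swap_apply_left, hεpm1, if_neg]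
    show ¬ (p - 1 < p - 1); omega
  have etop : ∀ i : Fin k, p ≤ (i:ℕ) → εstar i = (1 / s0) * (-((p:ℝ) - 1)) := by
    intro i hi
    rw [hεstar, Equiv.swap_apply_of_ne_of_ne (Fin.ne_of_val_ne (show (i:ℕ) ≠ 0 by omega))
      (Fin.ne_of_val_ne (show (i:ℕ) ≠ p - 1 by omega)), hεpm1, if_neg (by omega)]
  have emid : ∀ i : Fin k, 0 < (i:ℕ) → (i:ℕ) < p → εstar i = (1 / s0) * ((q:ℝ) + 1) := by
    intro i h1 h2
    rw [hεstar]
    by_cases hpe : (i:ℕ) = p - 1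
    · rw [show i = (⟨p - 1, by omega⟩ : Fin k) from Fin.ext hpe, Equiv.swap_apply_right,
        hεpm1, if_pos]
      show 0 < p - 1; omega
    · rw [Equiv.swap_apply_of_ne_of_ne (Fin.ne_of_val_ne (show (i:ℕ) ≠ 0 by omega))
        (Fin.ne_of_val_ne (show (i:ℕ) ≠ p - 1 by omega)), hεpm1, if_pos (by omega)]
  apply Set.ext
  rintro ⟨u, v⟩
  simp only [Set.mem_preimage, Set.mem_setOf_eq]
  constructor
  · rintro ⟨c, hc⟩
    have hpk' : p < k := by omega
    have h0 : U (u, v) (⟨0, by omega⟩ : Fin k) = (c • εstar) (⟨0, by omega⟩ : Fin k) := by rw [hc]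
    have h1 : U (u, v) (⟨p, hpk'⟩ : Fin k) = (c • εstar) (⟨p, hpk'⟩ : Fin k) := by rw [hc]
    rw [hU u v] at h0 h1
    simp only [PiLp.smul_apply, smul_eq_mul] at h0 h1
    rw [e0] at h0
    rw [etop ⟨p, hpk'⟩ (le_refl p)] at h1
    rw [if_pos trivial] at h0
    rw [if_neg (show ¬p = 0 by omega), if_neg (lt_irrefl p)] at h1
    have h2 : -u / a - ((p:ℝ) - 1) * v / b = ((k:ℝ) - 1) * u / a := h1.trans h0.symm
    have h3 : ((p:ℝ) - 1) * v / b = -((k:ℝ) * u / a) := by linear_combination -h2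
    show v = -m * u
    rw [hm']
    field_simp at h3 ⊢
    linear_combination h3
  · intro h
    have hv : v = -m * u := h
    refine ⟨-(((k:ℝ) - 1) * u * s0) / (a * ((p:ℝ) - 1)), ?_⟩
    ext i
    rw [hU u v]
    simp only [PiLp.smul_apply, smul_eq_mul]
    by_cases hi0 : (i:ℕ) = 0
    · rw [if_pos hi0, show i = (⟨0, by omega⟩ : Fin k) from Fin.ext hi0, e0]
      field_simp
    · rw [if_neg hi0]
      by_cases hip : (i:ℕ) < p
      · rw [if_pos hip, emid i (by omega) hip, hv, hm']
        rw [← hpq]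
        field_simp
        ring
      · rw [if_neg hip, etop i (by omega), hv, hm']
        field_simp
        ring
end

section
/- Pull-back of the cubic invariant: with k ≥ 3, 2 ≤ p ≤ ⌈k/2⌉, q = k-p, A = 1/√(k(k-1)), B = 1/√((k-1)(p-1)q), the function C_p(u,v) = (1/3)[A³(k-1)³u³ + (p-1)(-Au + Bqv)³ - q(Au + B(p-1)v)³] has gradient ∇C_p = (Z₁, Z₂) where Z₁(u,v) = (1/√(k(k-1)))·((k-2)u² - v²) and Z₂(u,v) = -(2/√(k(k-1)))·uv + ((q-p+1)/√(q(k-1)(p-1)))·v². -/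
theorem grad_cubic_pullback (k p q : ℕ) (hk : 3 ≤ k) (hp : 2 ≤ p) (hpk : p ≤ (k + 1) / 2)
    (hq : p + q = k)
    (A B : ℝ) (hA : A = 1 / Real.sqrt ((k : ℝ) * ((k : ℝ) - 1)))
    (hB : B = 1 / Real.sqrt (((k : ℝ) - 1) * ((p : ℝ) - 1) * q))
    (Cp : ℝ → ℝ → ℝ)
    (hCp : ∀ u v : ℝ, Cp u v = (1 / 3) *
      (A ^ 3 * ((k : ℝ) - 1) ^ 3 * u ^ 3 + ((p : ℝ) - 1) * (-A * u + B * q * v) ^ 3 -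
        (q : ℝ) * (A * u + B * ((p : ℝ) - 1) * v) ^ 3)) :
    ∀ u v : ℝ,
      deriv (fun t => Cp t v) u =
        (1 / Real.sqrt ((k : ℝ) * ((k : ℝ) - 1))) * (((k : ℝ) - 2) * u ^ 2 - v ^ 2) ∧
      deriv (fun t => Cp u t) v =
        -(2 / Real.sqrt ((k : ℝ) * ((k : ℝ) - 1))) * u * v +
          (((q : ℝ) - (p : ℝ) + 1) / Real.sqrt ((q : ℝ) * ((k : ℝ) - 1) * ((p : ℝ) - 1))) * v ^ 2 := by
  intro u v
  -- basic numeric facts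
  have hq1 : 1 ≤ q := by omega
  have hkR : (3 : ℝ) ≤ (k : ℝ) := by exact_mod_cast hk
  have hpR : (2 : ℝ) ≤ (p : ℝ) := by exact_mod_cast hp
  have hqR : (1 : ℝ) ≤ (q : ℝ) := by exact_mod_cast hq1
  have hpq : (p : ℝ) + (q : ℝ) = (k : ℝ) := by exact_mod_cast hq
  have hK0 : (0 : ℝ) < (k : ℝ) * ((k : ℝ) - 1) := by nlinarith
  have hT0 : (0 : ℝ) < ((k : ℝ) - 1) * ((p : ℝ) - 1) * (q : ℝ) := by
    apply mul_pos (mul_pos (by linarith) (by linarith)); linarith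
  have hsK : Real.sqrt ((k : ℝ) * ((k : ℝ) - 1)) ^ 2 = (k : ℝ) * ((k : ℝ) - 1) :=
    Real.sq_sqrt hK0.le
  have hsK0 : Real.sqrt ((k : ℝ) * ((k : ℝ) - 1)) ≠ 0 := by
    positivity
  have hsT : Real.sqrt (((k : ℝ) - 1) * ((p : ℝ) - 1) * (q : ℝ)) ^ 2
      = ((k : ℝ) - 1) * ((p : ℝ) - 1) * (q : ℝ) := Real.sq_sqrt hT0.le
  have hsT0 : Real.sqrt (((k : ℝ) - 1) * ((p : ℝ) - 1) * (q : ℝ)) ≠ 0 := by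
    positivity
  have hA2 : A ^ 2 * ((k : ℝ) * ((k : ℝ) - 1)) = 1 := by
    rw [hA]; rw [div_pow, one_pow, hsK]; field_simp
    exact div_self (ne_of_gt (by linarith))
  have hB2 : B ^ 2 * (((k : ℝ) - 1) * ((p : ℝ) - 1) * (q : ℝ)) = 1 := by
    rw [hB]; rw [div_pow, one_pow, hsT]; field_simp
    exact div_self (mul_pos (by linarith) (by linarith)).ne'
  -- derivatives
  have d1 : HasDerivAt (fun t => Cp t v)
      (A ^ 3 * ((k : ℝ) - 1) ^ 3 * u ^ 2 + ((p : ℝ) - 1) * (-A) * (-A * u + B * q * v) ^ 2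
        - (q : ℝ) * A * (A * u + B * ((p : ℝ) - 1) * v) ^ 2) u := by
    have e : (fun t => Cp t v) = fun t => (1 / 3) *
        (A ^ 3 * ((k : ℝ) - 1) ^ 3 * t ^ 3 + ((p : ℝ) - 1) * (-A * t + B * q * v) ^ 3 -
          (q : ℝ) * (A * t + B * ((p : ℝ) - 1) * v) ^ 3) := funext fun t => hCp t v
    rw [e]
    have h1 : HasDerivAt (fun t : ℝ => t ^ 3) (3 * u ^ 2) u := by
      simpa using hasDerivAt_pow 3 u
    have h2 : HasDerivAt (fun t : ℝ => -A * t + B * q * v) (-A) u := by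
      simpa using ((hasDerivAt_id u).const_mul (-A)).add_const (B * q * v)
    have h3 : HasDerivAt (fun t : ℝ => A * t + B * ((p : ℝ) - 1) * v) A u := by
      simpa using ((hasDerivAt_id u).const_mul A).add_const (B * ((p : ℝ) - 1) * v)
    have h2' := h2.fun_pow 3
    have h3' := h3.fun_pow 3
    have := (((h1.const_mul (A ^ 3 * ((k : ℝ) - 1) ^ 3)).fun_add
      (h2'.const_mul ((p : ℝ) - 1))).fun_sub (h3'.const_mul (q : ℝ))).const_mul (1 / 3)
    refine this.congr_deriv ?_
    push_cast
    ring
  have d2 : HasDerivAt (fun t => Cp u t)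
      (((p : ℝ) - 1) * (B * q) * (-A * u + B * q * v) ^ 2
        - (q : ℝ) * (B * ((p : ℝ) - 1)) * (A * u + B * ((p : ℝ) - 1) * v) ^ 2) v := by
    have e : (fun t => Cp u t) = fun t => (1 / 3) *
        (A ^ 3 * ((k : ℝ) - 1) ^ 3 * u ^ 3 + ((p : ℝ) - 1) * (-A * u + B * q * t) ^ 3 -
          (q : ℝ) * (A * u + B * ((p : ℝ) - 1) * t) ^ 3) := funext fun t => hCp u t
    rw [e]
    have h2 : HasDerivAt (fun t : ℝ => -A * u + B * q * t) (B * q) v := by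
      simpa using ((hasDerivAt_id v).const_mul (B * (q : ℝ))).const_add (-A * u)
    have h3 : HasDerivAt (fun t : ℝ => A * u + B * ((p : ℝ) - 1) * t) (B * ((p : ℝ) - 1)) v := by
      simpa using ((hasDerivAt_id v).const_mul (B * ((p : ℝ) - 1))).const_add (A * u)
    have h2' := h2.fun_pow 3
    have h3' := h3.fun_pow 3
    have := (((hasDerivAt_const v (A ^ 3 * ((k : ℝ) - 1) ^ 3 * u ^ 3)).fun_add
      (h2'.const_mul ((p : ℝ) - 1))).fun_sub (h3'.const_mul (q : ℝ))).const_mul (1 / 3)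
    refine this.congr_deriv ?_
    push_cast
    ring
  constructor
  · rw [d1.deriv, ← hA]
    linear_combination (A * ((k : ℝ) - 2) * u ^ 2) * hA2 + (-A * v ^ 2) * hB2 +
      (-A ^ 3 * u ^ 2 - A * B ^ 2 * (q : ℝ) * ((p : ℝ) - 1) * v ^ 2) * hpq
  · rw [d2.deriv]
    have hts : Real.sqrt ((q : ℝ) * ((k : ℝ) - 1) * ((p : ℝ) - 1))
        = Real.sqrt (((k : ℝ) - 1) * ((p : ℝ) - 1) * (q : ℝ)) := by
      congr 1; ring
    have e1 : (2 : ℝ) / Real.sqrt ((k : ℝ) * ((k : ℝ) - 1)) = 2 * A := by rw [hA]; ring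
    have e2 : ((q : ℝ) - (p : ℝ) + 1) / Real.sqrt (((k : ℝ) - 1) * ((p : ℝ) - 1) * (q : ℝ))
        = ((q : ℝ) - (p : ℝ) + 1) * B := by rw [hB]; ring
    rw [hts, e1, e2]
    linear_combination (-2 * A * u * v + B * ((q : ℝ) - (p : ℝ) + 1) * v ^ 2) * hB2 +
      (B ^ 2 * (q : ℝ) * ((p : ℝ) - 1) * (-2 * A * u * v + B * ((q : ℝ) - (p : ℝ) + 1) * v ^ 2)) * hpq
end

section
/- Solution branches of the planar system: for k ≥ 3, 2 ≤ p ≤ ⌈k/2⌉, q = k-p with q ≠ p, the point (u,v) = λ·√(k/(k-1))·(q/(q-p))·(1, √(k(p-1)/q)) satisfies λu - (1/√(k(k-1)))((k-2)u² - v²) = 0 and λv + (2/√(k(k-1)))uv - ((q-p+1)/√(q(k-1)(p-1)))v² = 0, for every λ ∈ ℝ. -/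
theorem branch_point_equilibrium (k p q : ℕ) (hk : 3 ≤ k) (hp : 2 ≤ p) (hpk : p ≤ (k + 1) / 2)
    (hq : p + q = k) (hqp : q ≠ p) :
    ∀ lam u v : ℝ,
      u = lam * Real.sqrt ((k : ℝ) / ((k : ℝ) - 1)) * ((q : ℝ) / ((q : ℝ) - (p : ℝ))) →
      v = lam * Real.sqrt ((k : ℝ) / ((k : ℝ) - 1)) * ((q : ℝ) / ((q : ℝ) - (p : ℝ))) *
        Real.sqrt ((k : ℝ) * ((p : ℝ) - 1) / q) →
      lam * u - (1 / Real.sqrt ((k : ℝ) * ((k : ℝ) - 1))) * (((k : ℝ) - 2) * u ^ 2 - v ^ 2) = 0 ∧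
      lam * v + (2 / Real.sqrt ((k : ℝ) * ((k : ℝ) - 1))) * u * v -
        (((q : ℝ) - (p : ℝ) + 1) / Real.sqrt ((q : ℝ) * ((k : ℝ) - 1) * ((p : ℝ) - 1))) * v ^ 2 = 0 := by
  intro lam u v hu hv
  -- basic numeric facts
  have hk3 : (3:ℝ) ≤ (k:ℝ) := by exact_mod_cast hk
  have hp2 : (2:ℝ) ≤ (p:ℝ) := by exact_mod_cast hp
  have hq1 : 1 ≤ q := by
    rcases Nat.eq_zero_or_pos q with h0 | h; · omega
    · omega
  have hq0 : (0:ℝ) < (q:ℝ) := by exact_mod_cast hq1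
  have hk1 : (0:ℝ) < (k:ℝ) - 1 := by linarith
  have hp1 : (0:ℝ) < (p:ℝ) - 1 := by linarith
  have hk0 : (0:ℝ) < (k:ℝ) := by linarith
  have hqe : (q:ℝ) = (k:ℝ) - (p:ℝ) := by
    have : (p:ℝ) + (q:ℝ) = (k:ℝ) := by exact_mod_cast hq
    linarith
  have hqp' : (q:ℝ) - (p:ℝ) ≠ 0 := by
    have : (q:ℝ) ≠ (p:ℝ) := by exact_mod_cast hqp
    intro h; apply this; linarith
  -- atomic sqrts
  set x := Real.sqrt (k:ℝ) with hxdef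
  set y := Real.sqrt ((k:ℝ) - 1) with hydef
  set z := Real.sqrt ((p:ℝ) - 1) with hzdef
  set w := Real.sqrt (q:ℝ) with hwdef
  have hx2 : x^2 = (k:ℝ) := Real.sq_sqrt hk0.le
  have hy2 : y^2 = (k:ℝ) - 1 := Real.sq_sqrt hk1.le
  have hz2 : z^2 = (p:ℝ) - 1 := Real.sq_sqrt hp1.le
  have hw2 : w^2 = (q:ℝ) := Real.sq_sqrt hq0.le
  have hx0 : x ≠ 0 := by positivity
  have hy0 : y ≠ 0 := by positivity
  have hz0 : z ≠ 0 := by positivity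
  have hw0 : w ≠ 0 := by positivity
  have e1 : Real.sqrt ((k:ℝ) / ((k:ℝ) - 1)) = x / y := Real.sqrt_div hk0.le _
  have e2 : Real.sqrt ((k:ℝ) * ((k:ℝ) - 1)) = x * y := Real.sqrt_mul hk0.le _
  have e3 : Real.sqrt ((k:ℝ) * ((p:ℝ) - 1) / (q:ℝ)) = x * z / w := by
    rw [Real.sqrt_div (by positivity) _, Real.sqrt_mul hk0.le]
  have e4 : Real.sqrt ((q:ℝ) * ((k:ℝ) - 1) * ((p:ℝ) - 1)) = w * y * z := by
    rw [Real.sqrt_mul (by positivity) _, Real.sqrt_mul hq0.le]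
  rw [e1] at hu hv
  rw [e3] at hv
  rw [e2, e4]
  subst hu hv
  constructor
  · field_simp
    linear_combination
      (lam^2*x*(q:ℝ)) * ((y^2*((q:ℝ)-(p:ℝ)) - (q:ℝ)*((k:ℝ)-2)) * hw2
        + (q:ℝ)*((q:ℝ)-(p:ℝ)) * hy2 + (q:ℝ)*z^2 * hx2 + (q:ℝ)*(k:ℝ) * hz2 + (q:ℝ) * hqe)
  · field_simp
    linear_combination
      (lam^2*x^2*(q:ℝ)*z) * ((y^2*((q:ℝ)-(p:ℝ)) + 2*(q:ℝ)) * hw2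
        + (q:ℝ)*((q:ℝ)-(p:ℝ)) * hy2 - (q:ℝ)*((q:ℝ)-(p:ℝ)+1) * hx2 + (q:ℝ) * hqe)
end

section
/- Monotonicity of bifurcation values: for fixed k ≥ 5 and η > 0, the quantity γ_{k,p} = 2√η·(√(k-2)/⁴√(k(k-1)))·((q-p+1)/(k-1))·√(1 - 4q(p-1)/((q-p+1)²k(k-2))) (with q = k-p, and γ_{k,1} = 2√η·√(k-2)/⁴√(k(k-1))) is strictly monotone decreasing in p on the range 1 ≤ p < k/2, and satisfies γ_{k,p} ≤ 2√η for all such p. -/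
set_option maxHeartbeats 1000000 in
theorem gamma_monotone (k : ℕ) (hk : 5 ≤ k) (η : ℝ) (hη : 0 < η)
    (γ : ℕ → ℝ)
    (hγ : ∀ p : ℕ, γ p = 2 * Real.sqrt η *
      (Real.sqrt ((k : ℝ) - 2) / ((k : ℝ) * ((k : ℝ) - 1)) ^ ((1 : ℝ) / 4)) *
      ((((k : ℝ) - p) - (p : ℝ) + 1) / ((k : ℝ) - 1)) *
      Real.sqrt (1 - 4 * ((k : ℝ) - p) * ((p : ℝ) - 1) /
        (((((k : ℝ) - p) - (p : ℝ) + 1) ^ 2) * (k : ℝ) * ((k : ℝ) - 2)))) :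
    StrictAntiOn γ {p : ℕ | 1 ≤ p ∧ 2 * p < k} ∧
    ∀ p : ℕ, 1 ≤ p → 2 * p < k → γ p ≤ 2 * Real.sqrt η := by
  have hK : (5:ℝ) ≤ (k:ℝ) := by exact_mod_cast hk
  set K : ℝ := (k:ℝ) with hKdef
  have hKm1 : (0:ℝ) < K - 1 := by linarith
  have hKm2 : (0:ℝ) < K - 2 := by linarith
  have hKpos : (0:ℝ) < K := by linarith
  have hN : (0:ℝ) < K * (K - 2) := by positivity
  set G : ℝ → ℝ := fun x => K * (K - 2) * ((K - x) - x + 1) ^ 2 - 4 * (K - x) * (x - 1)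
    with hGdef
  set B : ℝ := 2 * Real.sqrt η * (Real.sqrt (K - 2) / (K * (K - 1)) ^ ((1:ℝ)/4)) /
    ((K - 1) * Real.sqrt (K * (K - 2))) with hBdef
  have hMpos : (0:ℝ) < K * (K - 1) := by positivity
  have hRpos : (0:ℝ) < (K * (K - 1)) ^ ((1:ℝ)/4) := Real.rpow_pos_of_pos hMpos _
  have hBpos : 0 < B := by
    apply div_pos
    · apply mul_pos (by positivity)
      exact div_pos (Real.sqrt_pos.mpr hKm2) hRpos
    · exact mul_pos hKm1 (Real.sqrt_pos.mpr hN)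
  -- nonnegativity of G on the relevant real range
  have hGnn : ∀ x : ℝ, 1 ≤ x → 2 * x + 1 ≤ K → 0 ≤ G x := by
    intro x h1 h2
    simp only [hGdef]
    nlinarith [sq_nonneg ((K - x) - x + 1), sq_nonneg (K - 2*x - 1), sq_nonneg (K - 2*x + 1),
      mul_nonneg (by linarith : (0:ℝ) ≤ K - x) (by linarith : (0:ℝ) ≤ x - 1),
      sq_nonneg (K + 1 - 2*x)]
  -- key reformulation
  have key : ∀ p : ℕ, 1 ≤ p → 2 * p < k → γ p = B * Real.sqrt (G p) := by
    intro p hp1 hp2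
    have hx1 : (1:ℝ) ≤ (p:ℝ) := by exact_mod_cast hp1
    have hx2 : 2 * (p:ℝ) + 1 ≤ K := by
      rw [hKdef]; exact_mod_cast Nat.succ_le_of_lt hp2
    set x : ℝ := (p:ℝ) with hxdef
    have hs : (0:ℝ) < (K - x) - x + 1 := by linarith
    have hG0 : 0 ≤ G x := hGnn x hx1 hx2
    have heq : 1 - 4 * (K - x) * (x - 1) / (((K - x) - x + 1) ^ 2 * K * (K - 2))
        = G x / (((K - x) - x + 1) ^ 2 * (K * (K - 2))) := by
      field_simp
      ring
    rw [hγ p, heq, Real.sqrt_div hG0, Real.sqrt_mul (sq_nonneg _), Real.sqrt_sq hs.le]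
    rw [hBdef]
    have hsq : Real.sqrt (K * (K - 2)) ≠ 0 := ne_of_gt (Real.sqrt_pos.mpr hN)
    field_simp
    ring
  -- monotonicity of G at natural points
  have hGmono : ∀ p q : ℕ, 1 ≤ p → 2 * q < k → p < q → G q < G p := by
    intro p q hp1 hq2 hpq
    have hx1 : (1:ℝ) ≤ (p:ℝ) := by exact_mod_cast hp1
    have hxy : (p:ℝ) < (q:ℝ) := by exact_mod_cast hpq
    have hy2 : 2 * (q:ℝ) + 1 ≤ K := by
      rw [hKdef]; exact_mod_cast Nat.succ_le_of_lt hq2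
    simp only [hGdef]
    nlinarith [mul_pos hKpos hKm2, mul_pos (mul_pos hKpos hKm2)
      (by nlinarith : (0:ℝ) < ((q:ℝ) - p) * (2*K - 2*p - 2*q + 2)),
      (by nlinarith : (0:ℝ) < ((q:ℝ) - p) * (K + 1 - p - q))]
  constructor
  · intro p hp q hq hpq
    obtain ⟨hp1, hp2⟩ := hp
    obtain ⟨hq1, hq2⟩ := hq
    rw [key p hp1 hp2, key q hq1 hq2]
    apply mul_lt_mul_of_pos_left _ hBpos
    apply Real.sqrt_lt_sqrt
    · apply hGnn
      · exact_mod_cast hq1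
      · rw [hKdef]; exact_mod_cast Nat.succ_le_of_lt hq2
    · exact hGmono p q hp1 hq2 hpq
  · intro p hp1 hp2
    rw [key p hp1 hp2]
    have hx1 : (1:ℝ) ≤ (p:ℝ) := by exact_mod_cast hp1
    have hx2 : 2 * (p:ℝ) + 1 ≤ K := by
      rw [hKdef]; exact_mod_cast Nat.succ_le_of_lt hp2
    set x : ℝ := (p:ℝ) with hxdef
    have hG0 : 0 ≤ G x := hGnn x hx1 hx2
    -- main bound : sqrt(K-2) * sqrt(G x) ≤ (K(K-1))^(1/4) * ((K-1) * sqrt(K(K-2)))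
    have hR : (K * (K - 1)) ^ ((1:ℝ)/4) = Real.sqrt (Real.sqrt (K * (K - 1))) := by
      rw [Real.sqrt_eq_rpow, Real.sqrt_eq_rpow, ← Real.rpow_mul hMpos.le]
      norm_num
    have h1 : Real.sqrt (K - 2) * Real.sqrt (G x) = Real.sqrt ((K - 2) * G x) :=
      (Real.sqrt_mul hKm2.le _).symm
    have hstep1 : Real.sqrt (K - 1) ≤ Real.sqrt (Real.sqrt (K * (K - 1))) := by
      apply Real.sqrt_le_sqrt
      rw [Real.le_sqrt (by linarith) hMpos.le]
      nlinarith
    have hstep2 : Real.sqrt ((K - 2) * G x) ≤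
        Real.sqrt (K - 1) * ((K - 1) * Real.sqrt (K * (K - 2))) := by
      have : Real.sqrt (K - 1) * ((K - 1) * Real.sqrt (K * (K - 2)))
          = Real.sqrt ((K - 1) * ((K - 1)^2 * (K * (K - 2)))) := by
        rw [Real.sqrt_mul (by linarith : (0:ℝ) ≤ K - 1),
          Real.sqrt_mul (sq_nonneg _), Real.sqrt_sq hKm1.le]
      rw [this]
      apply Real.sqrt_le_sqrt
      have hs_ub : (K - x) - x + 1 ≤ K - 1 := by linarith
      have hs_lb : (0:ℝ) ≤ (K - x) - x + 1 := by linarith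
      have hmn : (0:ℝ) ≤ (K - x) * (x - 1) :=
        mul_nonneg (by linarith) (by linarith)
      have hA : K * (K - 2) * (((K - x) - x + 1) ^ 2) ≤ K * (K - 2) * (K - 1) ^ 2 := by
        apply mul_le_mul_of_nonneg_left _ hN.le
        nlinarith
      have hA2 : (K - 2) * (K * (K - 2) * (((K - x) - x + 1) ^ 2)) ≤
          (K - 2) * (K * (K - 2) * (K - 1) ^ 2) :=
        mul_le_mul_of_nonneg_left hA hKm2.le
      have hB2 : (K - 2) * (K * (K - 2) * (K - 1) ^ 2) ≤ (K - 1) * (K * (K - 2) * (K - 1) ^ 2) :=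
        mul_le_mul_of_nonneg_right (by linarith : (K - 2 : ℝ) ≤ K - 1)
          (le_of_lt (mul_pos hN (by positivity)))
      simp only [hGdef]
      nlinarith [hA2, hB2, mul_nonneg hKm2.le hmn]
    have hmain : Real.sqrt (K - 2) * Real.sqrt (G x) ≤
        (K * (K - 1)) ^ ((1:ℝ)/4) * ((K - 1) * Real.sqrt (K * (K - 2))) := by
      rw [h1, hR]
      calc Real.sqrt ((K - 2) * G x)
          ≤ Real.sqrt (K - 1) * ((K - 1) * Real.sqrt (K * (K - 2))) := hstep2
        _ ≤ Real.sqrt (Real.sqrt (K * (K - 1))) * ((K - 1) * Real.sqrt (K * (K - 2))) := by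
            apply mul_le_mul_of_nonneg_right hstep1
            positivity
    have hYpos : (0:ℝ) < (K * (K - 1)) ^ ((1:ℝ)/4) * ((K - 1) * Real.sqrt (K * (K - 2))) :=
      mul_pos hRpos (mul_pos hKm1 (Real.sqrt_pos.mpr hN))
    have hfrac : Real.sqrt (K - 2) * Real.sqrt (G x) /
        ((K * (K - 1)) ^ ((1:ℝ)/4) * ((K - 1) * Real.sqrt (K * (K - 2)))) ≤ 1 :=
      div_le_one_of_le₀ hmain hYpos.le
    have hBG : B * Real.sqrt (G x) = 2 * Real.sqrt η *
        (Real.sqrt (K - 2) * Real.sqrt (G x) /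
        ((K * (K - 1)) ^ ((1:ℝ)/4) * ((K - 1) * Real.sqrt (K * (K - 2))))) := by
      rw [hBdef]; field_simp
    rw [hBG]
    calc 2 * Real.sqrt η * _ ≤ 2 * Real.sqrt η * 1 :=
          mul_le_mul_of_nonneg_left hfrac (by positivity)
      _ = 2 * Real.sqrt η := mul_one _
end

section
/- Cubic equivariant eigenvalues: let k ≥ 4, 1 ≤ p ≤ k/2, q = k-p, and define T₂ : ℝ^k → ℝ^k by T₂(x)_i = x_i³ - (1/k)∑_j x_j³. Then T₂(ε_p) = α_p · ε_p where α_p = (1/k)(p/q + q/p - 1). Moreover α_p ∈ [1/k, 1], α_p is strictly decreasing in p on [1, k/2], with minimum value α_{k/2} = 1/k when k is even. -/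
lemma fin_sum_ite_const (k p : ℕ) (hp : p ≤ k) (a b : ℝ) :
    ∑ j : Fin k, (if (j : ℕ) < p then a else b) = p * a + ((k : ℝ) - p) * b := by
  rw [Fin.sum_univ_eq_sum_range (fun i => if i < p then a else b)]
  rw [Finset.range_eq_Ico, ← Finset.sum_Ico_consecutive _ (Nat.zero_le p) hp]
  have h1 : ∑ i ∈ Finset.Ico 0 p, (if i < p then a else b) = p * a := by
    rw [Finset.sum_congr rfl (fun i hi => if_pos (Finset.mem_Ico.mp hi).2),
      Finset.sum_const, Nat.card_Ico, nsmul_eq_mul, Nat.sub_zero]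
  have h2 : ∑ i ∈ Finset.Ico p k, (if i < p then a else b) = ((k : ℝ) - p) * b := by
    rw [Finset.sum_congr rfl (fun i hi => if_neg (Nat.not_lt.mpr (Finset.mem_Ico.mp hi).1)),
      Finset.sum_const, Nat.card_Ico, nsmul_eq_mul, Nat.cast_sub hp]
  rw [h1, h2]

theorem cubic_equivariant_eigenvalues (k : ℕ) (hk : 4 ≤ k)
    (T : (Fin k → ℝ) → (Fin k → ℝ))
    (hT : ∀ x, ∀ i : Fin k, T x i = x i ^ 3 - (1 / (k : ℝ)) * ∑ j, x j ^ 3)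
    (α : ℕ → ℝ)
    (hα : ∀ p : ℕ, α p = (1 / (k : ℝ)) * ((p : ℝ) / ((k : ℝ) - p) + ((k : ℝ) - p) / p - 1))
    (ε : ℕ → Fin k → ℝ)
    (hε : ∀ p : ℕ, ∀ i : Fin k, ε p i =
      (1 / Real.sqrt ((p : ℝ) * ((k : ℝ) - p) * k)) *
        (if (i : ℕ) < p then (k : ℝ) - p else -(p : ℝ))) :
    (∀ p : ℕ, 1 ≤ p → 2 * p ≤ k → T (ε p) = α p • ε p) ∧
    (∀ p : ℕ, 1 ≤ p → 2 * p ≤ k → α p ∈ Set.Icc (1 / (k : ℝ)) 1) ∧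
    (∀ p p' : ℕ, 1 ≤ p → p < p' → 2 * p' ≤ k → α p' < α p) ∧
    (Even k → α (k / 2) = 1 / (k : ℝ)) := by
  have hK : (0 : ℝ) < k := by
    have : (4 : ℝ) ≤ k := by exact_mod_cast hk
    linarith
  -- a normal form for α
  have hαe : ∀ p : ℕ, 1 ≤ p → 2 * p ≤ k →
      α p = ((p : ℝ) ^ 2 + ((k : ℝ) - p) ^ 2 - p * ((k : ℝ) - p)) /
        ((p : ℝ) * ((k : ℝ) - p) * k) := by
    intro p hp1 hp2
    have hP : (1 : ℝ) ≤ p := by exact_mod_cast hp1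
    have hP0 : (0 : ℝ) < p := by linarith
    have h2P : 2 * (p : ℝ) ≤ k := by exact_mod_cast hp2
    have hQ : (0 : ℝ) < (k : ℝ) - p := by linarith
    rw [hα]
    field_simp
  have bounds : ∀ p : ℕ, 1 ≤ p → 2 * p ≤ k →
      (1 : ℝ) ≤ (p : ℝ) ∧ 2 * (p : ℝ) ≤ k ∧ (0 : ℝ) < p ∧ (0 : ℝ) < (k : ℝ) - p := by
    intro p hp1 hp2
    have hP : (1 : ℝ) ≤ p := by exact_mod_cast hp1
    have h2P : 2 * (p : ℝ) ≤ k := by exact_mod_cast hp2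
    exact ⟨hP, h2P, by linarith, by linarith⟩
  refine ⟨?_, ?_, ?_, ?_⟩
  · -- eigenvector equation
    intro p hp1 hp2
    obtain ⟨hP, h2P, hP0, hQ0⟩ := bounds p hp1 hp2
    have hPQK : (0 : ℝ) < (p : ℝ) * ((k : ℝ) - p) * k := by positivity
    have hs0 : Real.sqrt ((p : ℝ) * ((k : ℝ) - p) * k) ≠ 0 :=
      ne_of_gt (Real.sqrt_pos.mpr hPQK)
    have hs2 : Real.sqrt ((p : ℝ) * ((k : ℝ) - p) * k) ^ 2 = (p : ℝ) * ((k : ℝ) - p) * k :=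
      Real.sq_sqrt hPQK.le
    have hcube : (1 / Real.sqrt ((p : ℝ) * ((k : ℝ) - p) * k)) ^ 3 =
        (1 / Real.sqrt ((p : ℝ) * ((k : ℝ) - p) * k)) * (1 / ((p : ℝ) * ((k : ℝ) - p) * k)) := by
      rw [← hs2]
      field_simp
      rw [Real.sq_sqrt (sq_nonneg _)]
    have hsum : ∑ j, ε p j ^ 3 = (1 / Real.sqrt ((p : ℝ) * ((k : ℝ) - p) * k)) ^ 3 *
        ((p : ℝ) * ((k : ℝ) - p) ^ 3 + ((k : ℝ) - p) * (-(p : ℝ)) ^ 3) := by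
      have : ∀ j : Fin k, ε p j ^ 3 =
          (1 / Real.sqrt ((p : ℝ) * ((k : ℝ) - p) * k)) ^ 3 *
            (if (j : ℕ) < p then ((k : ℝ) - p) ^ 3 else (-(p : ℝ)) ^ 3) := by
        intro j
        rw [hε p j, mul_pow]
        congr 1
        by_cases h : (j : ℕ) < p <;> simp [h]
      rw [Finset.sum_congr rfl (fun j _ => this j), ← Finset.mul_sum,
        fin_sum_ite_const k p (by omega) (((k : ℝ) - p) ^ 3) ((-(p : ℝ)) ^ 3)]
    funext i
    rw [hT, hsum, Pi.smul_apply, smul_eq_mul, hε p i, hα p, mul_pow, hcube]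
    generalize Real.sqrt ((p : ℝ) * ((k : ℝ) - p) * k) = s at hs0 ⊢
    by_cases h : (i : ℕ) < p
    · rw [if_pos h]
      field_simp
      ring
    · rw [if_neg h]
      field_simp
      ring
  · -- α p ∈ [1/k, 1]
    intro p hp1 hp2
    obtain ⟨hP, h2P, hP0, hQ0⟩ := bounds p hp1 hp2
    rw [hαe p hp1 hp2]
    set P : ℝ := (p : ℝ)
    set Q : ℝ := (k : ℝ) - p with hQdef
    have hQ1 : (1 : ℝ) ≤ Q := by rw [hQdef]; linarith
    have hden : (0 : ℝ) < P * Q * k := by positivity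
    constructor
    · rw [div_le_div_iff₀ hK hden]
      nlinarith [sq_nonneg (P - Q)]
    · rw [div_le_one hden]
      have hkPQ : (k : ℝ) = P + Q := by rw [hQdef]; ring
      nlinarith [mul_nonneg (sq_nonneg P) (sub_nonneg.mpr hQ1),
        mul_nonneg (sq_nonneg Q) (sub_nonneg.mpr hP), mul_pos hP0 hQ0]
  · -- strict monotonicity
    intro p p' hp1 hpp' hp2
    have hp'1 : 1 ≤ p' := by omega
    have hpk : 2 * p ≤ k := by omega
    obtain ⟨hA, h2A, hA0, hQA0⟩ := bounds p hp1 hpk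
    obtain ⟨hB, h2B, hB0, hQB0⟩ := bounds p' hp'1 hp2
    have hAB : (p : ℝ) < p' := by exact_mod_cast hpp'
    rw [hαe p hp1 hpk, hαe p' hp'1 hp2]
    set A : ℝ := (p : ℝ)
    set B : ℝ := (p' : ℝ)
    have hu : A * ((k : ℝ) - A) < B * ((k : ℝ) - B) := by nlinarith
    rw [div_lt_div_iff₀ (by positivity) (by positivity)]
    nlinarith [mul_pos (mul_pos hK hK) (mul_pos hK (sub_pos.mpr hu))]
  · -- even case
    intro ⟨m, hm⟩
    have hm2 : k / 2 = m := by omega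
    have hmR : ((k / 2 : ℕ) : ℝ) = m := by rw [hm2]
    have hkR : (k : ℝ) = 2 * m := by rw [hm]; push_cast; ring
    have hm0 : (0 : ℝ) < m := by
      have : 2 ≤ m := by omega
      have : (2 : ℝ) ≤ m := by exact_mod_cast this
      linarith
    rw [hα, hmR, hkR]
    have h1 : (2 : ℝ) * m - m = m := by ring
    rw [h1]
    field_simp
    ring
end
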